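/- For unit parameters, the critical wave speeds satisfy the strict inequalities λ̃* < λ* < √2, where λ̃* = 1/√2 is the minimum over μ < 0 of λ̃(μ) = -(√(μ⁴/4 - μ² + 5) + μ²/2 - 1)/(2μ), λ* is the minimum over μ < 0 of λ(μ) = -(√(μ⁴/4 + μ² + 5) + μ²/2 - 1)/(2μ), and √2 is the minimum over μ < 0 of λ_classical(μ) = -(1 + μ²/2)/μ. -/

import Mathlib

/-!
Write `b = -μ > 0`. The bound `λ̃(μ) ≥ 1/√2` is equivalent to
`√2 b + 1 - b²/2 ≤ √(b⁴/4 - b² + 5)`, and the difference of the squares of the two sides is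
`√2 (b - √2)² (b + √2) ≥ 0`, with equality at `b = √2`; there `λ̃(-√2) = 1/√2`. The seed-bank
radicand exceeds the spore radicand by `2μ²`, so `λ̃ < λ` pointwise, and `λ(-√2) = 1 < √2`.
-/

open Real

noncomputable def sporeSpeed (μ : ℝ) : ℝ :=
  -(√(μ ^ 4 / 4 - μ ^ 2 + 5) + μ ^ 2 / 2 - 1) / (2 * μ)

noncomputable def seedBankSpeed (μ : ℝ) : ℝ :=
  -(√(μ ^ 4 / 4 + μ ^ 2 + 5) + μ ^ 2 / 2 - 1) / (2 * μ)

lemma one_sub_sqrt_two_mul_sub_le_sqrt {μ : ℝ} (hμ : μ ≤ √2) :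
    1 - √2 * μ - μ ^ 2 / 2 ≤ √(μ ^ 4 / 4 - μ ^ 2 + 5) := by
  have hs : √2 ^ 2 = 2 := sq_sqrt zero_le_two
  refine le_sqrt_of_sq_le ?_
  have hfactor : μ ^ 4 / 4 - μ ^ 2 + 5 - (1 - √2 * μ - μ ^ 2 / 2) ^ 2
      = √2 * (μ + √2) ^ 2 * (√2 - μ) := by
    linear_combination (-(√2 * μ) - 2 - √2 ^ 2) * hs
  nlinarith [mul_nonneg (mul_nonneg (sqrt_nonneg 2) (sq_nonneg (μ + √2))) (sub_nonneg.2 hμ)]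

lemma one_div_sqrt_two_le_sporeSpeed {μ : ℝ} (hμ : μ < 0) : 1 / √2 ≤ sporeSpeed μ := by
  have hs : 0 < √2 := sqrt_pos.2 two_pos
  have hroot := one_sub_sqrt_two_mul_sub_le_sqrt (hμ.le.trans hs.le)
  rw [sporeSpeed, neg_div, ← div_neg, div_le_div_iff₀ hs (by linarith)]
  nlinarith [mul_le_mul_of_nonneg_left hroot hs.le, sq_sqrt zero_le_two]

lemma sporeSpeed_lt_seedBankSpeed {μ : ℝ} (hμ : μ < 0) : sporeSpeed μ < seedBankSpeed μ := by
  have hroot : √(μ ^ 4 / 4 - μ ^ 2 + 5) < √(μ ^ 4 / 4 + μ ^ 2 + 5) :=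
    sqrt_lt_sqrt (by nlinarith [sq_nonneg (μ ^ 2 - 2)]) (by nlinarith)
  rw [sporeSpeed, seedBankSpeed, div_lt_div_right_of_neg (by linarith)]
  linarith

lemma sporeSpeed_neg_sqrt_two : sporeSpeed (-√2) = 1 / √2 := by
  have hs : √2 ^ 2 = 2 := sq_sqrt zero_le_two
  have hradicand : (-√2) ^ 4 / 4 - (-√2) ^ 2 + 5 = 2 ^ 2 := by
    linear_combination (√2 ^ 2 / 4 - 1 / 2) * hs
  rw [sporeSpeed, hradicand, sqrt_sq zero_le_two, neg_sq, hs]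
  field_simp
  norm_num

lemma seedBankSpeed_neg_sqrt_two : seedBankSpeed (-√2) = 1 := by
  have hs : √2 ^ 2 = 2 := sq_sqrt zero_le_two
  have hradicand : (-√2) ^ 4 / 4 + (-√2) ^ 2 + 5 = (2 * √2) ^ 2 := by
    linear_combination (√2 ^ 2 / 4 - 5 / 2) * hs
  rw [seedBankSpeed, hradicand, sqrt_sq (by positivity), neg_sq, hs]
  field_simp
  ring

theorem critical_speeds_strict_inequalities
    (lamTilde lam : ℝ)
    (hTilde : IsLeast {y : ℝ | ∃ μ : ℝ, μ < 0 ∧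
      y = -(Real.sqrt (μ ^ 4 / 4 - μ ^ 2 + 5) + μ ^ 2 / 2 - 1) / (2 * μ)} lamTilde)
    (hLam : IsLeast {y : ℝ | ∃ μ : ℝ, μ < 0 ∧
      y = -(Real.sqrt (μ ^ 4 / 4 + μ ^ 2 + 5) + μ ^ 2 / 2 - 1) / (2 * μ)} lam) :
    lamTilde = 1 / Real.sqrt 2 ∧ lamTilde < lam ∧ lam < Real.sqrt 2 := by
  have hneg : -√2 < 0 := neg_lt_zero.2 (sqrt_pos.2 two_pos)
  have hTilde_eq : lamTilde = 1 / √2 :=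
    hTilde.unique ⟨⟨-√2, hneg, sporeSpeed_neg_sqrt_two.symm⟩,
      fun _ ⟨_, hμ, hy⟩ => hy ▸ one_div_sqrt_two_le_sporeSpeed hμ⟩
  obtain ⟨μ, hμ, hlam⟩ := hLam.1
  refine ⟨hTilde_eq, ?_, ?_⟩
  · calc lamTilde = 1 / √2 := hTilde_eq
      _ ≤ sporeSpeed μ := one_div_sqrt_two_le_sporeSpeed hμ
      _ < seedBankSpeed μ := sporeSpeed_lt_seedBankSpeed hμ
      _ = lam := hlam.symm
  · calc lam ≤ 1 := hLam.2 ⟨-√2, hneg, seedBankSpeed_neg_sqrt_two.symm⟩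
      _ < √2 := one_lt_sqrt_two
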